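/- arXiv:1506.01737 — 3 statements merged into one kernel-verified Lean document; each statement's English description precedes it below -/
import Mathlib

section
/- For any s > 1/2, the Fourier transform maps L^∞(ℝ) into the Sobolev space H^{-s}(ℝ), and the operator norm of the Fourier transform from L^∞(ℝ) to H^{-s}(ℝ) equals C_s = (2π ∫_ℝ (1+τ²)^{-s} dτ)^{1/2}. -/
/-!
STATEMENT 0: For s > 1/2, the Fourier transform maps L^∞(ℝ) into H^{-s}(ℝ), and
its operator norm from L^∞ to H^{-s} equals C_s = (2π ∫ (1+τ²)^{-s} dτ)^{1/2}.

Since the H^{-s} norm is defined by ‖g‖_{H^{-s}}² = 2π ∫ (1+τ²)^{-s} |(F⁻¹g)(τ)|² dτ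
and F⁻¹(F f) = f, the H^{-s} norm of the Fourier transform of f ∈ L^∞ is exactly
(2π ∫ (1+τ²)^{-s} ‖f(τ)‖² dτ)^{1/2}; the equality of operator norms is expressed as
the inequality for every f together with its attainment by some nonzero f.
-/

open MeasureTheory Real

/-- `H^{-s}` norm of the Fourier transform of `f`, via its time-side representative. -/
noncomputable def fourierHNegNorm (s : ℝ) (f : ℝ → ℂ) : ℝ :=
  Real.sqrt (2 * π * ∫ τ : ℝ, (1 + τ ^ 2) ^ (-s) * ‖f τ‖ ^ 2)

/-- The constant `C_s`. -/
noncomputable def Cs (s : ℝ) : ℝ :=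
  Real.sqrt (2 * π * ∫ τ : ℝ, (1 + τ ^ 2) ^ (-s))

open ENNReal

section WeightedBound

variable {α E : Type*} [MeasurableSpace α] {μ : Measure α} [NormedAddCommGroup E]

lemma ae_norm_le_toReal_eLpNorm_top {f : α → E} (hf : eLpNorm f ∞ μ ≠ ∞) :
    ∀ᵐ x ∂μ, ‖f x‖ ≤ (eLpNorm f ∞ μ).toReal := by
  rw [eLpNorm_exponent_top] at hf ⊢
  filter_upwards [enorm_ae_le_eLpNormEssSup f μ] with x hx
  simpa using ENNReal.toReal_mono hf hx

lemma integral_mul_norm_sq_le_of_memLp_top {w : α → ℝ} {f : α → E} (hw : Integrable w μ)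
    (hw_nonneg : 0 ≤ᵐ[μ] w) (hf : MemLp f ∞ μ) :
    ∫ x, w x * ‖f x‖ ^ 2 ∂μ ≤ (∫ x, w x ∂μ) * (eLpNorm f ∞ μ).toReal ^ 2 := by
  rw [← integral_mul_const]
  refine integral_mono_of_nonneg ?_ (hw.mul_const _) ?_
  · filter_upwards [hw_nonneg] with x hx
    exact mul_nonneg hx (sq_nonneg _)
  · filter_upwards [hw_nonneg, ae_norm_le_toReal_eLpNorm_top hf.eLpNorm_ne_top] with x hwx hfx
    exact mul_le_mul_of_nonneg_left (pow_le_pow_left₀ (norm_nonneg _) hfx 2) hwx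

end WeightedBound

lemma integrable_one_add_sq_rpow_neg {s : ℝ} (hs : 1 / 2 < s) :
    Integrable fun τ : ℝ => (1 + τ ^ 2) ^ (-s) := by
  have h : (Module.finrank ℝ ℝ : ℝ) < 2 * s := by
    rw [Module.finrank_self, Nat.cast_one]; linarith
  simpa [neg_div, mul_div_assoc] using integrable_rpow_neg_one_add_norm_sq (μ := volume) h

lemma fourierHNegNorm_le (s : ℝ) (hs : 1 / 2 < s) {f : ℝ → ℂ} (hf : MemLp f ∞ volume) :
    fourierHNegNorm s f ≤ Cs s * (eLpNorm f ∞ volume).toReal := by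
  have hweight : 0 ≤ᵐ[volume] fun τ : ℝ => (1 + τ ^ 2) ^ (-s) :=
    ae_of_all _ fun τ => rpow_nonneg (by positivity) _
  have hbound := integral_mul_norm_sq_le_of_memLp_top (integrable_one_add_sq_rpow_neg hs)
    hweight hf
  calc fourierHNegNorm s f
      ≤ √(2 * π * ((∫ τ : ℝ, (1 + τ ^ 2) ^ (-s)) * (eLpNorm f ∞ volume).toReal ^ 2)) :=
        sqrt_le_sqrt (mul_le_mul_of_nonneg_left hbound (by positivity))
    _ = Cs s * (eLpNorm f ∞ volume).toReal := by
        rw [Cs, ← mul_assoc, sqrt_mul (by positivity), sqrt_sq toReal_nonneg]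

theorem stmt0 (s : ℝ) (hs : 1 / 2 < s) :
    (∀ f : ℝ → ℂ, MemLp f ⊤ volume →
      fourierHNegNorm s f ≤ Cs s * (eLpNorm f ⊤ volume).toReal) ∧
    (∃ f : ℝ → ℂ, MemLp f ⊤ volume ∧ eLpNorm f ⊤ volume ≠ 0 ∧
      fourierHNegNorm s f = Cs s * (eLpNorm f ⊤ volume).toReal) := by
  have h_one : eLpNorm (fun _ : ℝ => (1 : ℂ)) ∞ volume = 1 := by
    rw [eLpNorm_const _ (by simp) (NeZero.ne volume)]
    simp
  refine ⟨fun f hf => fourierHNegNorm_le s hs hf, fun _ => 1, memLp_top_const 1, ?_, ?_⟩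
  · simp [h_one]
  · simp [h_one, fourierHNegNorm, Cs]
end

section
/- Let ℋ be a Hilbert space, h a self-adjoint operator on ℋ, μ₀ ∈ ℝ with dist(μ₀, σ(h)) ≥ d > 0, and let Σ : ℝ → B(ℋ) be a measurable family of bounded operators with ess sup_ω ‖Σ(ω)‖ ≤ M. Then for every λ with 0 ≤ λ < d/M and every ω ∈ ℝ, the operator μ₀ + iω - h - λΣ(ω) is boundedly invertible, and ‖(μ₀ + iω - h - λΣ(ω))^{-1}‖ ≤ (d/(d-λM)) · (ω² + d²)^{-1/2}. -/
/-!
The spectrum of the self-adjoint `h` is real, so every spectral point lies at distance at least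
`s = √(ω² + d²)` from `μ₀ + iω`; for a normal operator the continuous functional calculus turns
this into `‖(μ₀ + iω - h)⁻¹‖ ≤ s⁻¹`. Factoring out `μ₀ + iω - h`, a Neumann series shows that a
perturbation `t` with `‖t‖ ≤ K < s` keeps the operator invertible, with inverse of norm at most
`(s - K)⁻¹`. For `t = λΣ(ω)` this is at most `d / ((d - λM) s)` because `d ≤ s`.
-/

theorem Units.norm_inv_oneSub_le {R : Type*} [NormedRing R] [HasSummableGeomSeries R]
    (h1 : ‖(1 : R)‖ ≤ 1) (t : R) (h : ‖t‖ < 1) :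
    ‖(↑(Units.oneSub t h)⁻¹ : R)‖ ≤ (1 - ‖t‖)⁻¹ :=
  (tsum_geometric_le_of_norm_lt_one t h).trans (by linarith)

theorem Units.exists_sub_norm_inv_le {R : Type*} [NormedRing R] [HasSummableGeomSeries R]
    (h1 : ‖(1 : R)‖ ≤ 1) (x : Rˣ) (t : R) {r K : ℝ} (hr : 0 < r)
    (hx : ‖(↑x⁻¹ : R)‖ ≤ r⁻¹) (ht : ‖t‖ ≤ K) (hK : K < r) :
    ∃ u : Rˣ, (u : R) = x - t ∧ ‖(↑u⁻¹ : R)‖ ≤ (r - K)⁻¹ := by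
  have hxt : ‖(↑x⁻¹ : R) * t‖ ≤ K / r := calc
    ‖(↑x⁻¹ : R) * t‖ ≤ r⁻¹ * K := norm_mul_le_of_le hx ht
    _ = K / r := by ring
  have hxt1 : ‖(↑x⁻¹ : R) * t‖ < 1 := hxt.trans_lt ((div_lt_one hr).2 hK)
  refine ⟨x * Units.oneSub _ hxt1, by simp [mul_sub], ?_⟩
  calc ‖(↑(x * Units.oneSub _ hxt1)⁻¹ : R)‖
      = ‖(↑(Units.oneSub _ hxt1)⁻¹ : R) * ↑x⁻¹‖ := by simp
    _ ≤ (1 - K / r)⁻¹ * r⁻¹ := by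
        refine norm_mul_le_of_le ((Units.norm_inv_oneSub_le h1 _ hxt1).trans ?_) hx
        gcongr
        linarith [(div_lt_one hr).2 hK]
    _ = (r - K)⁻¹ := by
        field_simp

theorem IsStarNormal.exists_resolvent_norm_le {A : Type*} [CStarAlgebra A] {a : A}
    [IsStarNormal a] {z : ℂ} {r : ℝ} (hr : 0 < r)
    (h : ∀ x ∈ spectrum ℂ a, r ≤ ‖z - x‖) :
    ∃ u : Aˣ, (u : A) = algebraMap ℂ A z - a ∧ ‖(↑u⁻¹ : A)‖ ≤ r⁻¹ := by
  have hne : ∀ x ∈ spectrum ℂ a, z - x ≠ 0 := fun x hx ↦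
    norm_pos_iff.1 (hr.trans_le (h x hx))
  refine ⟨cfcUnits (fun x ↦ z - x) a hne, ?_, ?_⟩
  · rw [val_cfcUnits (fun x ↦ z - x) a hne, cfc_sub (fun _ ↦ z) (fun x ↦ x) a, cfc_const z a,
      cfc_id' ℂ a]
  · rw [val_inv_cfcUnits (fun x ↦ z - x) a hne]
    refine norm_cfc_le (inv_nonneg.2 hr.le) fun x hx ↦ ?_
    rw [norm_inv]
    exact inv_anti₀ hr (h x hx)

theorem Complex.sqrt_sq_add_sq_le_norm_sub {μ ω d : ℝ} {x : ℂ} (hx : x.im = 0) (hd : 0 ≤ d)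
    (h : d ≤ ‖(μ : ℂ) - x‖) : √(ω ^ 2 + d ^ 2) ≤ ‖(μ + ω * I : ℂ) - x‖ := by
  have hx' : x = x.re := Complex.ext rfl (by simp [hx])
  rw [hx', ← ofReal_sub, norm_real, Real.norm_eq_abs] at h
  have : (μ + ω * I : ℂ) - x = (μ - x.re : ℝ) + ω * I := by
    conv_lhs => rw [hx']
    push_cast; ring
  rw [this, norm_add_mul_I, add_comm]
  exact Real.sqrt_le_sqrt (by nlinarith [sq_abs (μ - x.re)])

open ContinuousLinearMap

theorem stmt17 {H : Type*} [NormedAddCommGroup H] [InnerProductSpace ℂ H]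
    [CompleteSpace H]
    (T : H →L[ℂ] H) (hT : IsSelfAdjoint T)
    (μ₀ d : ℝ) (hd : 0 < d)
    (hgap : ∀ x ∈ spectrum ℂ T, d ≤ ‖(μ₀ : ℂ) - x‖)
    (M : ℝ) (hM : 0 < M)
    (Sig : ℝ → (H →L[ℂ] H)) (hSig : ∀ ω : ℝ, ‖Sig ω‖ ≤ M)
    (lam : ℝ) (hlam0 : 0 ≤ lam) (hlam : lam < d / M) (ω : ℝ) :
    ∃ R : H →L[ℂ] H,
      ((((μ₀ : ℂ) + (ω : ℂ) * Complex.I) • (1 : H →L[ℂ] H)) - T - (lam : ℂ) • Sig ω)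
          ∘L R = 1 ∧
      R ∘L ((((μ₀ : ℂ) + (ω : ℂ) * Complex.I) • (1 : H →L[ℂ] H)) - T
          - (lam : ℂ) • Sig ω) = 1 ∧
      ‖R‖ ≤ (d / (d - lam * M)) / Real.sqrt (ω ^ 2 + d ^ 2) := by
  set s := √(ω ^ 2 + d ^ 2)
  have hds : d ≤ s := Real.le_sqrt_of_sq_le (by nlinarith)
  have hlamM : lam * M < d := (lt_div_iff₀ hM).1 hlam
  have hSig_lam : ‖(lam : ℂ) • Sig ω‖ ≤ lam * M := by
    rw [norm_smul, Complex.norm_real, Real.norm_of_nonneg hlam0]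
    exact mul_le_mul_of_nonneg_left (hSig ω) hlam0
  have : IsStarNormal T := hT.isStarNormal
  obtain ⟨u, hu, hu_inv⟩ := IsStarNormal.exists_resolvent_norm_le (hd.trans_le hds)
    fun x hx ↦ Complex.sqrt_sq_add_sq_le_norm_sub (hT.im_eq_zero_of_mem_spectrum hx) hd.le
      (hgap x hx)
  obtain ⟨v, hv, hv_inv⟩ := u.exists_sub_norm_inv_le norm_id_le _ (hd.trans_le hds) hu_inv
    hSig_lam (hlamM.trans_le hds)
  rw [hu, Algebra.algebraMap_eq_smul_one] at hv
  refine ⟨↑v⁻¹, by rw [← hv]; exact v.mul_inv, by rw [← hv]; exact v.inv_mul, ?_⟩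
  have hlamM0 : 0 ≤ lam * M := mul_nonneg hlam0 hM.le
  refine hv_inv.trans ?_
  rw [inv_eq_one_div, div_div, div_le_div_iff₀ (by linarith) (by positivity)]
  nlinarith
end

section
/- Let γ be a finite-rank orthogonal projection on L²(ℝ³) whose range is spanned by functions in H²(ℝ³). Then for every h ∈ L⁶(ℝ³), the operator γ ∘ M_h (M_h = multiplication by h) is Hilbert-Schmidt, and there exists a constant K (depending only on γ) such that ‖γ M_h‖_{𝔖₂} ≤ K ‖h‖_{L⁶} for all h ∈ L⁶(ℝ³). -/
/-!
The kernel of `γ M_h` is `∑ₖ φₖ(x) · (conj φₖ · h)(y)`, a finite sum of tensor products, and the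
`L²` norm of a tensor product on the product space is the product of the `L²` norms. Each `φₖ`
lies in `L² ∩ L^∞ ⊆ L³`, so Hölder's inequality with `1/2 = 1/3 + 1/6` gives
`‖conj φₖ · h‖₂ ≤ ‖φₖ‖₃ ‖h‖₆`, and `K = ∑ₖ ‖φₖ‖₂ ‖φₖ‖₃` works.
-/

open MeasureTheory ENNReal ComplexConjugate

instance : HolderTriple 3 6 2 := .of_toReal ⟨by norm_num, by norm_num, by norm_num⟩

namespace MeasureTheory

section Exponents

variable {α E 𝕜 : Type*} {_ : MeasurableSpace α} {μ : Measure α} {p q r : ℝ≥0∞}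

theorem MemLp.mono_exponent_of_memLp_top [NormedAddCommGroup E] {f : α → E}
    (hp : MemLp f p μ) (htop : MemLp f ∞ μ) (hp0 : p ≠ 0) (hpq : p ≤ q) : MemLp f q μ := by
  rcases eq_or_ne q ∞ with rfl | hq
  · exact htop
  have hp_top : p ≠ ∞ := ne_top_of_le_ne_top hq hpq
  have hpq' : p.toReal ≤ q.toReal := toReal_mono hq hpq
  rw [← integrable_norm_rpow_iff hp.1 (ne_bot_of_le_ne_bot hp0 hpq) hq]
  -- `‖f‖ ^ q = ‖f‖ ^ (q - p) * ‖f‖ ^ p` is a bounded function times an integrable one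
  have hsplit : (fun x => ‖f x‖ ^ q.toReal)
      = fun x => ‖f x‖ ^ (q.toReal - p.toReal) * ‖f x‖ ^ p.toReal := by
    funext x
    rw [← Real.rpow_add_of_nonneg (norm_nonneg _) (sub_nonneg.2 hpq') toReal_nonneg,
      sub_add_cancel]
  rw [hsplit]
  refine (hp.integrable_norm_rpow hp0 hp_top).bdd_mul
    (c := lpNorm f ∞ μ ^ (q.toReal - p.toReal))
    (hp.1.norm.aemeasurable.pow_const _).aestronglyMeasurable ?_
  filter_upwards [ae_le_lpNorm_exponent_top htop] with x hx
  rw [Real.norm_of_nonneg (by positivity)]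
  exact Real.rpow_le_rpow (norm_nonneg _) hx (sub_nonneg.2 hpq')

theorem lpNorm_mul_le_mul_lpNorm [NormedRing 𝕜] {f g : α → 𝕜} [HolderTriple p q r]
    (hf : MemLp f p μ) (hg : MemLp g q μ) :
    lpNorm (fun x => f x * g x) r μ ≤ lpNorm f p μ * lpNorm g q μ := by
  rw [← toReal_eLpNorm hf.1, ← toReal_eLpNorm hg.1,
    ← toReal_eLpNorm (MemLp.mul' (r := r) hg hf).1, ← toReal_mul]
  exact toReal_mono (mul_ne_top hf.eLpNorm_ne_top hg.eLpNorm_ne_top)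
    (eLpNorm_smul_le_mul_eLpNorm hg.1 hf.1 : eLpNorm (f • g) r μ ≤ _)

end Exponents

section TensorProduct

variable {α β 𝕜 : Type*} {_ : MeasurableSpace α} {_ : MeasurableSpace β}
  {μ : Measure α} {ν : Measure β} [SFinite ν] [NormedRing 𝕜] [NormMulClass 𝕜] {p : ℝ≥0∞}

theorem eLpNorm_prod_mul {f : α → 𝕜} {g : β → 𝕜} (hf : AEStronglyMeasurable f μ)
    (hg : AEStronglyMeasurable g ν) (hp0 : p ≠ 0) (hp_top : p ≠ ∞) :
    eLpNorm (fun z : α × β => f z.1 * g z.2) p (μ.prod ν) = eLpNorm f p μ * eLpNorm g p ν := by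
  simp only [eLpNorm_eq_lintegral_rpow_enorm_toReal hp0 hp_top, enorm_mul,
    ENNReal.mul_rpow_of_nonneg _ _ toReal_nonneg]
  rw [lintegral_prod_mul (hf.enorm.pow_const _) (hg.enorm.pow_const _),
    ENNReal.mul_rpow_of_nonneg _ _ (by positivity)]

theorem MemLp.prod_mul {f : α → 𝕜} {g : β → 𝕜} (hf : MemLp f p μ) (hg : MemLp g p ν)
    (hp0 : p ≠ 0) (hp_top : p ≠ ∞) : MemLp (fun z : α × β => f z.1 * g z.2) p (μ.prod ν) :=
  ⟨hf.1.comp_fst.mul hg.1.comp_snd, by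
    rw [eLpNorm_prod_mul hf.1 hg.1 hp0 hp_top]
    exact ENNReal.mul_lt_top hf.2 hg.2⟩

theorem lpNorm_prod_mul {f : α → 𝕜} {g : β → 𝕜} (hf : AEStronglyMeasurable f μ)
    (hg : AEStronglyMeasurable g ν) (hp0 : p ≠ 0) (hp_top : p ≠ ∞) :
    lpNorm (fun z : α × β => f z.1 * g z.2) p (μ.prod ν) = lpNorm f p μ * lpNorm g p ν := by
  rw [← toReal_eLpNorm hf, ← toReal_eLpNorm hg,
    ← toReal_eLpNorm (f := fun z : α × β => f z.1 * g z.2) (hf.comp_fst.mul hg.comp_snd),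
    eLpNorm_prod_mul hf hg hp0 hp_top, toReal_mul]

variable {ι : Type*} (s : Finset ι) {f : ι → α → 𝕜} {g : ι → β → 𝕜}

theorem memLp_sum_prod_mul (hf : ∀ i ∈ s, MemLp (f i) p μ) (hg : ∀ i ∈ s, MemLp (g i) p ν)
    (hp0 : p ≠ 0) (hp_top : p ≠ ∞) :
    MemLp (fun z : α × β => ∑ i ∈ s, f i z.1 * g i z.2) p (μ.prod ν) := by
  simpa only [Finset.sum_fn] using
    memLp_finsetSum' s fun i hi => (hf i hi).prod_mul (hg i hi) hp0 hp_top

theorem lpNorm_sum_prod_mul_le (hf : ∀ i ∈ s, MemLp (f i) p μ)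
    (hg : ∀ i ∈ s, MemLp (g i) p ν) (hp : 1 ≤ p) (hp_top : p ≠ ∞) :
    lpNorm (fun z : α × β => ∑ i ∈ s, f i z.1 * g i z.2) p (μ.prod ν)
      ≤ ∑ i ∈ s, lpNorm (f i) p μ * lpNorm (g i) p ν := by
  have hp0 : p ≠ 0 := (zero_lt_one.trans_le hp).ne'
  simp only [← Finset.sum_fn]
  refine (lpNorm_sum_le (fun i hi => (hf i hi).prod_mul (hg i hi) hp0 hp_top) hp).trans_eq ?_
  exact Finset.sum_congr rfl fun i hi => lpNorm_prod_mul (hf i hi).1 (hg i hi).1 hp0 hp_top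

end TensorProduct

end MeasureTheory

theorem stmt19_general (m : ℕ) (φ : Fin m → (Fin 3 → ℝ) → ℂ)
    (hL2 : ∀ i, MemLp (φ i) 2 volume)
    (hLinf : ∀ i, MemLp (φ i) ⊤ volume) :
    ∃ K : ℝ, 0 ≤ K ∧
      ∀ h : (Fin 3 → ℝ) → ℂ, MemLp h 6 volume →
        MemLp (fun p : (Fin 3 → ℝ) × (Fin 3 → ℝ) =>
            (∑ k : Fin m, φ k p.1 * starRingEnd ℂ (φ k p.2)) * h p.2) 2
          (volume.prod volume) ∧
        (eLpNorm (fun p : (Fin 3 → ℝ) × (Fin 3 → ℝ) =>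
            (∑ k : Fin m, φ k p.1 * starRingEnd ℂ (φ k p.2)) * h p.2) 2
          (volume.prod volume)).toReal ≤ K * (eLpNorm h 6 volume).toReal := by
  refine ⟨∑ k, lpNorm (φ k) 2 volume * lpNorm (φ k) 3 volume,
    Finset.sum_nonneg fun k _ => mul_nonneg lpNorm_nonneg lpNorm_nonneg, fun h hh => ?_⟩
  have hφ3 k : MemLp (φ k) 3 volume :=
    (hL2 k).mono_exponent_of_memLp_top (hLinf k) two_ne_zero (by norm_num)
  set g : Fin m → (Fin 3 → ℝ) → ℂ := fun k r => conj (φ k r) * h r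
  have hg k : MemLp (g k) 2 volume := hh.mul' (hφ3 k).star
  have hg_le k : lpNorm (g k) 2 volume ≤ lpNorm (φ k) 3 volume * lpNorm h 6 volume := by
    have := lpNorm_mul_le_mul_lpNorm (r := 2) (hφ3 k).star hh
    rwa [show star (φ k) = conj (φ k) from rfl, lpNorm_conj] at this
  have hkernel : (fun p : (Fin 3 → ℝ) × (Fin 3 → ℝ) =>
      (∑ k, φ k p.1 * conj (φ k p.2)) * h p.2) = fun p => ∑ k, φ k p.1 * g k p.2 := by
    ext p
    simp only [Finset.sum_mul, g, mul_assoc]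
  have hmem := memLp_sum_prod_mul Finset.univ (fun k _ => hL2 k) (fun k _ => hg k)
    two_ne_zero ofNat_ne_top
  rw [hkernel, toReal_eLpNorm hmem.1, toReal_eLpNorm hh.1, Finset.sum_mul]
  refine ⟨hmem, (lpNorm_sum_prod_mul_le Finset.univ (fun k _ => hL2 k) (fun k _ => hg k)
    one_le_two ofNat_ne_top).trans (Finset.sum_le_sum fun k _ => ?_)⟩
  rw [mul_assoc]
  exact mul_le_mul_of_nonneg_left (hg_le k) lpNorm_nonneg

theorem stmt19 (m : ℕ) (φ : Fin m → (Fin 3 → ℝ) → ℂ)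
    (hON : ∀ i j : Fin m,
      (∫ r : Fin 3 → ℝ, starRingEnd ℂ (φ i r) * φ j r) = if i = j then 1 else 0)
    (hL2 : ∀ i, MemLp (φ i) 2 volume)
    (hLinf : ∀ i, MemLp (φ i) ⊤ volume) :
    ∃ K : ℝ, 0 ≤ K ∧
      ∀ h : (Fin 3 → ℝ) → ℂ, MemLp h 6 volume →
        MemLp (fun p : (Fin 3 → ℝ) × (Fin 3 → ℝ) =>
            (∑ k : Fin m, φ k p.1 * starRingEnd ℂ (φ k p.2)) * h p.2) 2
          (volume.prod volume) ∧
        (eLpNorm (fun p : (Fin 3 → ℝ) × (Fin 3 → ℝ) =>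
            (∑ k : Fin m, φ k p.1 * starRingEnd ℂ (φ k p.2)) * h p.2) 2
          (volume.prod volume)).toReal ≤ K * (eLpNorm h 6 volume).toReal :=
  stmt19_general m φ hL2 hLinf
end
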